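/- arXiv:1710.10884 — 2 statements merged into one kernel-verified Lean document; each statement's English description precedes it below -/
import Mathlib

section
/- For a prime p and a nonnegative integer n with base-p digits n_0,…,n_{ν−1}, the number of t in {0,…,n} such that p does not divide C(n,t) equals the product over i of (n_i + 1). -/
open Finset

private lemma fine_small {p m r : ℕ} (hp : p.Prime) (hm : m < p) (hr : r ≤ m) :
    ¬ p ∣ m.choose r := by
  intro hdvd
  have h1 : m.choose r * r.factorial * (m - r).factorial = m.factorial :=
    Nat.choose_mul_factorial_mul_factorial hr
  have : p ∣ m.factorial := h1 ▸ Dvd.dvd.mul_right (Dvd.dvd.mul_right hdvd _) _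
  exact absurd ((Nat.Prime.dvd_factorial hp).mp this) (not_le.mpr hm)

private lemma fine_step (p n : ℕ) (hp : p.Prime) :
    ((Finset.range (n + 1)).filter (fun t => ¬ p ∣ n.choose t)).card
      = (n % p + 1) *
        ((Finset.range (n / p + 1)).filter (fun t => ¬ p ∣ (n / p).choose t)).card := by
  haveI : Fact p.Prime := ⟨hp⟩
  have hp1 : 0 < p := hp.pos
  have key : ∀ t, (p ∣ n.choose t) ↔ p ∣ (n % p).choose (t % p) * (n / p).choose (t / p) := by
    intro t
    have h := Choose.choose_modEq_choose_mod_mul_choose_div_nat (n := n) (k := t) (p := p)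
    constructor
    · intro hd
      exact (Nat.modEq_zero_iff_dvd).mp (h.symm.trans ((Nat.modEq_zero_iff_dvd).mpr hd))
    · intro hd
      exact (Nat.modEq_zero_iff_dvd).mp (h.trans ((Nat.modEq_zero_iff_dvd).mpr hd))
  rw [← Finset.card_range (n % p + 1), ← Finset.card_product]
  apply Finset.card_bij (fun t _ => (t % p, t / p))
  · intro t ht
    simp only [Finset.mem_filter, Finset.mem_range] at ht
    obtain ⟨htn, hnd⟩ := ht
    rw [key t, hp.dvd_mul, not_or] at hnd
    simp only [Finset.mem_product, Finset.mem_filter, Finset.mem_range]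
    have h1 : t % p ≤ n % p := by
      by_contra hc
      exact hnd.1 (by simp [Nat.choose_eq_zero_of_lt (not_le.mp hc)])
    have h2 : t / p ≤ n / p := by
      by_contra hc
      exact hnd.2 (by simp [Nat.choose_eq_zero_of_lt (not_le.mp hc)])
    exact ⟨Nat.lt_succ_of_le h1, Nat.lt_succ_of_le h2, hnd.2⟩
  · intro a ha b hb hab
    have h1 := congrArg Prod.fst hab
    have h2 := congrArg Prod.snd hab
    simp only at h1 h2
    have ha' := Nat.div_add_mod a p
    have hb' := Nat.div_add_mod b p
    rw [h1, h2] at ha'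
    omega
  · rintro ⟨r, q⟩ hrq
    simp only [Finset.mem_product, Finset.mem_filter, Finset.mem_range] at hrq
    obtain ⟨hr, hq, hnd⟩ := hrq
    refine ⟨r + p * q, ?_, ?_⟩
    · have hrlt : r < p := lt_of_le_of_lt (Nat.lt_succ_iff.mp hr) (Nat.mod_lt _ hp1)
      have hmod : (r + p * q) % p = r := by
        rw [Nat.add_mul_mod_self_left, Nat.mod_eq_of_lt hrlt]
      have hdiv : (r + p * q) / p = q := by
        rw [Nat.add_mul_div_left _ _ hp1, Nat.div_eq_of_lt hrlt, zero_add]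
      simp only [Finset.mem_filter, Finset.mem_range]
      constructor
      · have : r + p * q ≤ n % p + p * (n / p) := by
          have := Nat.lt_succ_iff.mp hr
          have := Nat.lt_succ_iff.mp hq
          nlinarith
        rw [Nat.mod_add_div] at this
        omega
      · rw [key, hp.dvd_mul, hmod, hdiv, not_or]
        refine ⟨fine_small hp (Nat.mod_lt _ hp1) (Nat.lt_succ_iff.mp hr), hnd⟩
    · have hrlt : r < p := lt_of_le_of_lt (Nat.lt_succ_iff.mp hr) (Nat.mod_lt _ hp1)
      ext <;> simp [Nat.add_mul_mod_self_left, Nat.mod_eq_of_lt hrlt,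
        Nat.add_mul_div_left _ _ hp1, Nat.div_eq_of_lt hrlt]

/-- Fine's theorem: the number of entries in row `n` of Pascal's triangle not
divisible by the prime `p` equals the product of `(nᵢ + 1)` over the base-`p`
digits `nᵢ` of `n`. -/
theorem fine (p n : ℕ) (hp : p.Prime) :
    ((Finset.range (n + 1)).filter (fun t => ¬ p ∣ n.choose t)).card
      = ((Nat.digits p n).map (· + 1)).prod := by
  induction n using Nat.strong_induction_on with
  | _ n ih =>
    rcases Nat.eq_zero_or_pos n with hn | hn
    · subst hn; simp [Finset.filter_singleton, Nat.dvd_one, hp.ne_one]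
    · rw [Nat.digits_def' hp.two_le hn, List.map_cons, List.prod_cons,
        fine_step p n hp, ih (n / p) (Nat.div_lt_self hn hp.one_lt)]
end

section
/- For every nonnegative integer n, the number of t in {0,…,n} with ν₂(C(n,t)) = 1 equals 2^{s₂(n)−1} · |n|_{10}, where |n|_{10} is the number of occurrences of the block '10' in the binary expansion of n. -/
/-- `s₂`, the binary sum-of-digits function. -/
def s2 (n : ℕ) : ℕ := (Nat.digits 2 n).sum

lemma s2_two_mul (m : ℕ) : s2 (2 * m) = s2 m := by
  rcases Nat.eq_zero_or_pos m with h | h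
  · simp [h, s2]
  · unfold s2
    rw [Nat.digits_def' (by norm_num : 1 < 2) (by omega)]
    simp [Nat.mul_div_cancel_left _ (by norm_num : 0 < 2), Nat.mul_mod_right]

lemma s2_two_mul_add_one (m : ℕ) : s2 (2 * m + 1) = s2 m + 1 := by
  unfold s2
  rw [Nat.digits_def' (by norm_num : 1 < 2) (by omega)]
  have h1 : (2 * m + 1) % 2 = 1 := by omega
  have h2 : (2 * m + 1) / 2 = m := by omega
  rw [h1, h2]
  simp [Nat.add_comm]

lemma s2_succ_le (n : ℕ) : s2 (n + 1) ≤ s2 n + 1 := by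
  induction n using Nat.strong_induction_on with
  | _ n ih =>
    rcases Nat.even_or_odd n with ⟨m, hm⟩ | ⟨m, hm⟩
    · subst hm
      rw [show m + m = 2 * m by ring, s2_two_mul, s2_two_mul_add_one]
    · subst hm
      rw [show 2 * m + 1 + 1 = 2 * (m + 1) by ring, s2_two_mul, s2_two_mul_add_one]
      have := ih m (by omega); omega

lemma s2_add_le (a b : ℕ) : s2 (a + b) ≤ s2 a + s2 b := by
  induction a using Nat.strong_induction_on generalizing b with
  | _ a ih =>
    rcases Nat.eq_zero_or_pos a with h | h
    · simp [h]
    rcases Nat.even_or_odd a with ⟨x, hx⟩ | ⟨x, hx⟩ <;>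
      rcases Nat.even_or_odd b with ⟨y, hy⟩ | ⟨y, hy⟩ <;> subst hx hy
    · rw [show x + x + (y + y) = 2 * (x + y) by ring, show x + x = 2 * x by ring,
        show y + y = 2 * y by ring, s2_two_mul, s2_two_mul, s2_two_mul]
      exact ih x (by omega) y
    · rw [show x + x + (2 * y + 1) = 2 * (x + y) + 1 by ring, show x + x = 2 * x by ring,
        s2_two_mul_add_one, s2_two_mul, s2_two_mul_add_one]
      have := ih x (by omega) y; omega
    · rw [show 2 * x + 1 + (y + y) = 2 * (x + y) + 1 by ring, show y + y = 2 * y by ring,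
        s2_two_mul_add_one, s2_two_mul, s2_two_mul_add_one]
      have := ih x (by omega) y; omega
    · rw [show 2 * x + 1 + (2 * y + 1) = 2 * (x + y + 1) by ring,
        s2_two_mul, s2_two_mul_add_one, s2_two_mul_add_one]
      have h1 := s2_succ_le (x + y)
      have h2 := ih x (by omega) y
      omega

lemma s2_pos (m : ℕ) (hm : 0 < m) : 0 < s2 m := by
  induction m using Nat.strong_induction_on with
  | _ m ih =>
    rcases Nat.even_or_odd m with ⟨x, hx⟩ | ⟨x, hx⟩ <;> subst hx
    · rw [show x + x = 2 * x by ring, s2_two_mul]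
      exact ih x (by omega) (by omega)
    · rw [s2_two_mul_add_one]; omega

lemma nu2_eq (n k : ℕ) (h : k ≤ n) :
    padicValNat 2 (n.choose k) = s2 k + s2 (n - k) - s2 n := by
  have := @sub_one_mul_padicValNat_choose_eq_sub_sum_digits 2 k n ⟨Nat.prime_two⟩ h
  simpa [s2] using this

lemma sum_range_two_mul (f : ℕ → ℕ) (n : ℕ) :
    ∑ i ∈ Finset.range (2 * n), f i = ∑ i ∈ Finset.range n, (f (2 * i) + f (2 * i + 1)) := by
  induction n with
  | zero => simp
  | succ n ih =>
    rw [show 2 * (n + 1) = 2 * n + 1 + 1 by ring, Finset.sum_range_succ, Finset.sum_range_succ,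
      ih, Finset.sum_range_succ]
    ring

def G0 (n : ℕ) : ℕ := ∑ t ∈ Finset.range (n + 1), if s2 t + s2 (n - t) = s2 n then 1 else 0

def G (n : ℕ) : ℕ := ∑ t ∈ Finset.range (n + 1), if s2 t + s2 (n - t) = s2 n + 1 then 1 else 0

def H (m : ℕ) : ℕ := ∑ s ∈ Finset.range m, if s2 s + s2 (m - 1 - s) + 1 = s2 m then 1 else 0

lemma G0_odd (m : ℕ) : G0 (2 * m + 1) = 2 * G0 m := by
  unfold G0
  rw [show 2 * m + 1 + 1 = 2 * (m + 1) by ring, sum_range_two_mul, Finset.mul_sum]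
  refine Finset.sum_congr rfl fun s hs => ?_
  have hsm : s ≤ m := by simpa [Nat.lt_succ_iff] using hs
  have e1 : 2 * m + 1 - 2 * s = 2 * (m - s) + 1 := by omega
  have e2 : 2 * m + 1 - (2 * s + 1) = 2 * (m - s) := by omega
  rw [e1, e2, s2_two_mul, s2_two_mul, s2_two_mul_add_one, s2_two_mul_add_one, s2_two_mul_add_one]
  by_cases hC : s2 s + s2 (m - s) = s2 m
  · rw [if_pos (by omega), if_pos (by omega), if_pos hC]; norm_num
  · rw [if_neg (by omega), if_neg (by omega), if_neg hC]; norm_num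

lemma G0_even (m : ℕ) : G0 (2 * m) = G0 m := by
  unfold G0
  rw [Finset.sum_range_succ, Finset.sum_range_succ (n := m), sum_range_two_mul]
  have hlast : (if s2 (2 * m) + s2 (2 * m - 2 * m) = s2 (2 * m) then 1 else 0) = 1 := by
    simp [s2]
  have hlast2 : (if s2 m + s2 (m - m) = s2 m then 1 else 0) = 1 := by simp [s2]
  rw [hlast, hlast2]
  congr 1
  refine Finset.sum_congr rfl fun s hs => ?_
  have hsm : s < m := Finset.mem_range.mp hs
  have e1 : 2 * m - 2 * s = 2 * (m - s) := by omega
  have e2 : 2 * m - (2 * s + 1) = 2 * (m - 1 - s) + 1 := by omega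
  rw [e1, e2, s2_two_mul, s2_two_mul, s2_two_mul, s2_two_mul_add_one, s2_two_mul_add_one]
  have h1 : s2 m ≤ s2 (m - 1) + 1 := by
    have := s2_succ_le (m - 1); rwa [show m - 1 + 1 = m by omega] at this
  have h2 : s2 (m - 1) ≤ s2 s + s2 (m - 1 - s) := by
    have := s2_add_le s (m - 1 - s)
    rwa [show s + (m - 1 - s) = m - 1 by omega] at this
  by_cases hC : s2 s + s2 (m - s) = s2 m
  · rw [if_pos (by omega), if_neg (by omega)]
  · rw [if_neg (by omega), if_neg (by omega)]

lemma G0_eq (n : ℕ) : G0 n = 2 ^ s2 n := by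
  induction n using Nat.strong_induction_on with
  | _ n ih =>
    rcases Nat.eq_zero_or_pos n with h | h
    · subst h
      unfold G0
      rw [Finset.sum_range_one]
      norm_num [s2]
    rcases Nat.even_or_odd n with ⟨x, hx⟩ | ⟨x, hx⟩ <;> subst hx
    · rw [show x + x = 2 * x by ring, G0_even, s2_two_mul, ih x (by omega)]
    · rw [G0_odd, s2_two_mul_add_one, ih x (by omega), pow_succ]; ring

lemma G_odd (m : ℕ) : G (2 * m + 1) = 2 * G m := by
  unfold G
  rw [show 2 * m + 1 + 1 = 2 * (m + 1) by ring, sum_range_two_mul, Finset.mul_sum]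
  refine Finset.sum_congr rfl fun s hs => ?_
  have hsm : s ≤ m := by simpa [Nat.lt_succ_iff] using hs
  have e1 : 2 * m + 1 - 2 * s = 2 * (m - s) + 1 := by omega
  have e2 : 2 * m + 1 - (2 * s + 1) = 2 * (m - s) := by omega
  rw [e1, e2, s2_two_mul, s2_two_mul, s2_two_mul_add_one, s2_two_mul_add_one, s2_two_mul_add_one]
  by_cases hC : s2 s + s2 (m - s) = s2 m + 1
  · rw [if_pos (by omega), if_pos (by omega), if_pos hC]; norm_num
  · rw [if_neg (by omega), if_neg (by omega), if_neg hC]; norm_num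

lemma G_even (m : ℕ) : G (2 * m) = G m + H m := by
  unfold G H
  rw [Finset.sum_range_succ, Finset.sum_range_succ (n := m), sum_range_two_mul]
  have hlast : (if s2 (2 * m) + s2 (2 * m - 2 * m) = s2 (2 * m) + 1 then 1 else 0) = 0 := by
    simp [s2]
  have hlast2 : (if s2 m + s2 (m - m) = s2 m + 1 then 1 else 0) = 0 := by simp [s2]
  rw [hlast, hlast2, Nat.add_zero, Nat.add_zero, Finset.sum_add_distrib]
  congr 1
  · refine Finset.sum_congr rfl fun s hs => ?_
    have hsm : s < m := Finset.mem_range.mp hs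
    have e1 : 2 * m - 2 * s = 2 * (m - s) := by omega
    rw [e1, s2_two_mul, s2_two_mul, s2_two_mul]
  · refine Finset.sum_congr rfl fun s hs => ?_
    have hsm : s < m := Finset.mem_range.mp hs
    have e2 : 2 * m - (2 * s + 1) = 2 * (m - 1 - s) + 1 := by omega
    rw [e2, s2_two_mul, s2_two_mul_add_one, s2_two_mul_add_one]
    by_cases hC : s2 s + s2 (m - 1 - s) + 1 = s2 m
    · rw [if_pos (by omega), if_pos hC]
    · rw [if_neg (by omega), if_neg hC]

lemma H_even (m : ℕ) (hm : m % 2 = 0) : H m = 0 := by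
  unfold H
  refine Finset.sum_eq_zero fun s hs => ?_
  have hsm : s < m := Finset.mem_range.mp hs
  have hm2 : s2 m = s2 (m / 2) := by
    conv_lhs => rw [show m = 2 * (m / 2) by omega]
    rw [s2_two_mul]
  have hm1 : s2 (m - 1) = s2 (m / 2 - 1) + 1 := by
    rw [show m - 1 = 2 * (m / 2 - 1) + 1 by omega, s2_two_mul_add_one]
  have h3 : s2 (m / 2) ≤ s2 (m / 2 - 1) + 1 := by
    have := s2_succ_le (m / 2 - 1)
    rwa [show m / 2 - 1 + 1 = m / 2 by omega] at this
  have h2 : s2 (m - 1) ≤ s2 s + s2 (m - 1 - s) := by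
    have := s2_add_le s (m - 1 - s)
    rwa [show s + (m - 1 - s) = m - 1 by omega] at this
  rw [if_neg (by omega)]

lemma H_odd (k : ℕ) : H (2 * k + 1) = 2 ^ s2 k := by
  have h : H (2 * k + 1) = G0 (2 * k) := by
    unfold H G0
    refine Finset.sum_congr rfl fun s hs => ?_
    rw [show 2 * k + 1 - 1 - s = 2 * k - s from by omega, s2_two_mul_add_one, s2_two_mul]
    by_cases hC : s2 s + s2 (2 * k - s) = s2 k
    · rw [if_pos (by omega), if_pos (by omega)]
    · rw [if_neg (by omega), if_neg (by omega)]
  rw [h, G0_even, G0_eq]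

/-- `|n|₁₀`: the number of occurrences of the block `10` in the binary
expansion of `n`, i.e. the number of positions `i` where bit `i+1` is `1`
and bit `i` is `0`. -/
def blockCount10 (n : ℕ) : ℕ :=
  ((Finset.range (n + 1)).filter
    (fun i => n / 2 ^ (i + 1) % 2 = 1 ∧ n / 2 ^ i % 2 = 0)).card

lemma block_eq_sum (n N : ℕ) (hN : n + 1 ≤ N) :
    blockCount10 n = ∑ i ∈ Finset.range N,
      if n / 2 ^ (i + 1) % 2 = 1 ∧ n / 2 ^ i % 2 = 0 then 1 else 0 := by
  rw [blockCount10, Finset.card_filter]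
  apply Finset.sum_subset (Finset.range_subset_range.mpr hN)
  intro i hi hni
  have hi2 : n + 1 ≤ i + 1 := by
    have := Finset.mem_range.not.mp hni; omega
  have hlt : n < 2 ^ (i + 1) :=
    lt_of_lt_of_le (Nat.lt_two_pow_self (n := n)) (Nat.pow_le_pow_right (by norm_num) (by omega))
  rw [if_neg]
  rintro ⟨h1, -⟩
  rw [Nat.div_eq_of_lt hlt] at h1
  simp at h1

lemma div_pow_succ (m b i : ℕ) (hb : b < 2) : (2 * m + b) / 2 ^ (i + 1) = m / 2 ^ i := by
  rw [pow_succ', ← Nat.div_div_eq_div_mul]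
  congr 1
  omega

lemma B_odd (m : ℕ) : blockCount10 (2 * m + 1) = blockCount10 m := by
  rw [block_eq_sum (2 * m + 1) (2 * m + 2 + 1) (by omega), Finset.sum_range_succ',
    block_eq_sum m (2 * m + 2) (by omega)]
  have h0 : (if (2 * m + 1) / 2 ^ (0 + 1) % 2 = 1 ∧ (2 * m + 1) / 2 ^ 0 % 2 = 0
      then 1 else 0) = 0 := by
    rw [if_neg]
    rintro ⟨-, h2⟩
    rw [pow_zero, Nat.div_one] at h2
    omega
  rw [h0, Nat.add_zero]
  refine Finset.sum_congr rfl fun i _ => ?_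
  rw [div_pow_succ m 1 (i + 1) (by norm_num), div_pow_succ m 1 i (by norm_num)]

lemma B_even (m : ℕ) : blockCount10 (2 * m) = blockCount10 m + (if m % 2 = 1 then 1 else 0) := by
  rcases Nat.eq_zero_or_pos m with h | h
  · subst h; decide
  rw [block_eq_sum (2 * m) (2 * m + 1) (by omega), Finset.sum_range_succ',
    block_eq_sum m (2 * m) (by omega)]
  have e : ∀ i, 2 * m / 2 ^ (i + 1) = m / 2 ^ i := fun i => by
    rw [show 2 * m = 2 * m + 0 by ring, div_pow_succ m 0 i (by norm_num)]
  congr 1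
  · refine Finset.sum_congr rfl fun i _ => ?_
    rw [e (i + 1), e i]
  · rw [e 0, pow_zero, Nat.div_one]
    by_cases hm : m % 2 = 1
    · rw [if_pos ⟨by omega, by omega⟩, if_pos hm]
    · rw [if_neg (by omega), if_neg hm]

lemma B_zero : blockCount10 0 = 0 := by decide

lemma G_eq (n : ℕ) : G n = 2 ^ (s2 n - 1) * blockCount10 n := by
  induction n using Nat.strong_induction_on with
  | _ n ih =>
    rcases Nat.eq_zero_or_pos n with h | h
    · subst h
      have hG : G 0 = 0 := by
        unfold G
        rw [Finset.sum_range_one, if_neg (by simp [s2])]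
      rw [hG, B_zero, Nat.mul_zero]
    rcases Nat.even_or_odd n with ⟨x, hx⟩ | ⟨x, hx⟩ <;> subst hx
    · have hx1 : 0 < x := by omega
      rw [show x + x = 2 * x by ring, G_even, B_even, s2_two_mul, ih x (by omega),
        Nat.mul_add]
      congr 1
      rcases Nat.even_or_odd x with ⟨k, hk⟩ | ⟨k, hk⟩ <;> subst hk
      · rw [H_even _ (by omega), if_neg (by omega), Nat.mul_zero]
      · rw [H_odd, if_pos (by omega), Nat.mul_one, s2_two_mul_add_one]
        simp
    · rw [G_odd, B_odd, ih x (by omega), s2_two_mul_add_one, Nat.add_sub_cancel]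
      rcases Nat.eq_zero_or_pos x with h0 | h0
      · subst h0
        rw [B_zero]
        ring
      · rw [← Nat.mul_assoc, ← pow_succ']
        congr 2
        have := s2_pos x h0
        omega

/-- Howard's formula: `ϑ₂(1,n) = 2^(s₂(n)-1) · |n|₁₀`. -/
theorem howard_theta_one (n : ℕ) :
    ((Finset.range (n + 1)).filter
      (fun t => padicValNat 2 (n.choose t) = 1)).card
      = 2 ^ (s2 n - 1) * blockCount10 n := by
  rw [Finset.card_filter, ← G_eq]
  unfold G
  refine Finset.sum_congr rfl fun t ht => ?_
  have htn : t ≤ n := by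
    have := Finset.mem_range.mp ht; omega
  rw [nu2_eq n t htn]
  by_cases hC : s2 t + s2 (n - t) = s2 n + 1
  · rw [if_pos (by omega), if_pos hC]
  · rw [if_neg (by omega), if_neg hC]
end
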